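/- No rewiring of A_weak is language-equivalent to A_weak; that is, for every deterministic Büchi automaton B such that: (1) the states of B are the 13 states {p_a, p_b, p_c, p'_a, p'_b, p'_c, q_a, q_b, q_c, q'_a, q'_b, q'_c, Y} of A_weak (the good states of A_weak), with initial state any one of them; (2) the non-significant transitions of B are exactly the non-significant transitions of A_weak whose source is one of these 13 states; and (3) every significant transition (p,a,q) of B satisfies L(A_weak, q) = a⁻¹ L(A_weak, p), where a⁻¹L = {w : aw ∈ L} and (A_weak, s) denotes A_weak with initial state s — it holds that L(B) ≠ L_weak. -/

import Mathlib

/-- A (nondeterministic) Büchi/coBüchi automaton: an initial state, a set of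
transitions, and a subset of *significant* transitions. -/
structure BuchiAutomaton (σ : Type) (Q : Type) where
  init : Q
  trans : Set (Q × σ × Q)
  sig : Set (Q × σ × Q)
  sig_sub : sig ⊆ trans

namespace BuchiAutomaton

variable {σ Q : Type}

/-- `ρ` is a run of `A` on the infinite word `w`, starting at the state `p`. -/
def IsRunFrom (A : BuchiAutomaton σ Q) (p : Q) (w : ℕ → σ) (ρ : ℕ → Q) : Prop :=
  ρ 0 = p ∧ ∀ i, (ρ i, w i, ρ (i + 1)) ∈ A.trans

/-- Büchi acceptance: the run contains infinitely many significant transitions. -/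
def BuchiAcc (A : BuchiAutomaton σ Q) (w : ℕ → σ) (ρ : ℕ → Q) : Prop :=
  ∀ N, ∃ i, N ≤ i ∧ (ρ i, w i, ρ (i + 1)) ∈ A.sig

/-- coBüchi acceptance: the run contains finitely many significant transitions. -/
def CoBuchiAcc (A : BuchiAutomaton σ Q) (w : ℕ → σ) (ρ : ℕ → Q) : Prop :=
  ∃ N, ∀ i, N ≤ i → (ρ i, w i, ρ (i + 1)) ∉ A.sig

/-- The language of `A` (as a Büchi automaton), with initial state `p`. -/
def LangFrom (A : BuchiAutomaton σ Q) (p : Q) : Set (ℕ → σ) :=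
  {w | ∃ ρ, A.IsRunFrom p w ρ ∧ A.BuchiAcc w ρ}

/-- The language of `A`, read as a Büchi automaton. -/
def Lang (A : BuchiAutomaton σ Q) : Set (ℕ → σ) :=
  A.LangFrom A.init

/-- The language of `A`, read as a coBüchi automaton. -/
def CoLang (A : BuchiAutomaton σ Q) : Set (ℕ → σ) :=
  {w | ∃ ρ, A.IsRunFrom A.init w ρ ∧ A.CoBuchiAcc w ρ}

/-- `A` is deterministic: at most one outgoing transition per state and letter. -/
def Deterministic (A : BuchiAutomaton σ Q) : Prop :=
  ∀ p a q q', (p, a, q) ∈ A.trans → (p, a, q') ∈ A.trans → q = q'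

/-- `FinRun A l p`: `l` is a finite run of `A` from the initial state, ending in
the state `p` (represented as the chronological list of its transitions). -/
inductive FinRun (A : BuchiAutomaton σ Q) : List (Q × σ × Q) → Q → Prop
  | nil : FinRun A [] A.init
  | snoc {l : List (Q × σ × Q)} {p : Q} {a : σ} {q : Q} :
      FinRun A l p → (p, a, q) ∈ A.trans → FinRun A (l ++ [(p, a, q)]) q

/-- A resolver for `A`: a function from finite runs and letters to transitions,
such that on every finite run from the initial state ending in a state `p` and
every letter `a`, it outputs a transition on `a` with source `p`. -/
structure Resolver (A : BuchiAutomaton σ Q) where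
  res : List (Q × σ × Q) → σ → Q × σ × Q
  res_valid : ∀ l p a, A.FinRun l p →
    (res l a).1 = p ∧ (res l a).2.1 = a ∧ res l a ∈ A.trans

/-- The history (finite run) built by a resolver after reading `n` letters of `w`. -/
def Resolver.hist {A : BuchiAutomaton σ Q} (r : Resolver A) (w : ℕ → σ) : ℕ → List (Q × σ × Q)
  | 0 => []
  | n + 1 => r.hist w n ++ [r.res (r.hist w n) (w n)]

/-- The run induced by the resolver on `w` satisfies the Büchi condition. -/
def Resolver.InducedBuchiAcc {A : BuchiAutomaton σ Q} (r : Resolver A) (w : ℕ → σ) : Prop :=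
  ∀ N, ∃ n, N ≤ n ∧ r.res (r.hist w n) (w n) ∈ A.sig

/-- The run induced by the resolver on `w` satisfies the coBüchi condition. -/
def Resolver.InducedCoBuchiAcc {A : BuchiAutomaton σ Q} (r : Resolver A) (w : ℕ → σ) : Prop :=
  ∃ N, ∀ n, N ≤ n → r.res (r.hist w n) (w n) ∉ A.sig

/-- `A` is history-deterministic (as a Büchi automaton). -/
def HistoryDeterministic (A : BuchiAutomaton σ Q) : Prop :=
  ∃ r : Resolver A, ∀ w ∈ A.Lang, r.InducedBuchiAcc w

/-- `A` is history-deterministic (as a coBüchi automaton). -/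
def CoHistoryDeterministic (A : BuchiAutomaton σ Q) : Prop :=
  ∃ r : Resolver A, ∀ w ∈ A.CoLang, r.InducedCoBuchiAcc w

end BuchiAutomaton

/-- The finite factor `w[m..n)` of the infinite word `w`, as a list. -/
def wordSegment {σ : Type} (w : ℕ → σ) (m n : ℕ) : List σ :=
  (List.range (n - m)).map fun i => w (m + i)

/-- `omegaPow X`: the infinite words that can be written as an infinite
concatenation of finite words, each belonging to `X`. -/
def omegaPow {σ : Type} (X : Set (List σ)) : Set (ℕ → σ) :=
  {w | ∃ φ : ℕ → ℕ, φ 0 = 0 ∧ StrictMono φ ∧ ∀ k, wordSegment w (φ k) (φ (k + 1)) ∈ X}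

/-- The index set `{a, b, c}`. -/
inductive ABC : Type
  | a | b | c
deriving DecidableEq

instance instFintypeABC : Fintype ABC :=
  Fintype.ofList [ABC.a, ABC.b, ABC.c] (fun x => by cases x <;> simp)

/-- The alphabet `Σ' = {a, b, c, x, y, r_a, r_b, r_c}`. -/
inductive Sig8 : Type
  | la | lb | lc | lx | ly
  | lr (α : ABC)
deriving DecidableEq, Fintype

/-- The letter associated with an index in `{a, b, c}`. -/
def ABC.tolet : ABC → Sig8
  | .a => .la
  | .b => .lb
  | .c => .lc

/-- Finite words over `{x, y}` (the language `(x^*y^*)^*`). -/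
def XYword : Set (List Sig8) := {u | ∀ l ∈ u, l = Sig8.lx ∨ l = Sig8.ly}

/-- The language `L_α = (x^*y^*)^* x α` of finite words (over `{x,y,a,b,c}`). -/
def Lfin (α : ABC) : Set (List Sig8) :=
  {w | ∃ u ∈ XYword, w = u ++ [Sig8.lx, α.tolet]}

/-- Finite words over `{x, a, b, c, y}`, i.e. containing no reset letter. -/
def NoReset : Set (List Sig8) := {u | ∀ l ∈ u, ∀ α : ABC, l ≠ Sig8.lr α}

/-- `L_weak = ((x+a+b+c+y)^* ⋃_{α≠β} (L_α ∪ {r_α}) L_β L_β Σ'^* y)^ω`. -/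
def LWeak : Set (ℕ → Sig8) :=
  omegaPow {w | ∃ α β : ABC, α ≠ β ∧ ∃ u v₁ v₂ v₃ z : List Sig8,
    u ∈ NoReset ∧ (v₁ ∈ Lfin α ∨ v₁ = [Sig8.lr α]) ∧ v₂ ∈ Lfin β ∧ v₃ ∈ Lfin β ∧
    w = u ++ v₁ ++ v₂ ++ v₃ ++ z ++ [Sig8.ly]}

/-- The 17 states of the automaton `A_weak`. -/
inductive St17 : Type
  | I
  | io (α : ABC)
  | p (α : ABC)
  | p' (α : ABC)
  | q (α : ABC)
  | q' (α : ABC)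
  | Y
deriving DecidableEq

open Sig8 in
/-- The significant transitions of `A_weak`. -/
def weakSig : Set (St17 × Sig8 × St17) :=
  {t | (∃ α : ABC, t = (.I, lr α, .p α)) ∨
       (∃ α : ABC, t = (.io α, α.tolet, .p α)) ∨
       (∃ α γ : ABC, t = (.io α, lr γ, .p γ)) ∨
       (∃ α : ABC, t = (.q' α, α.tolet, .Y)) ∨
       t = (.Y, ly, .I)}

open Sig8 in
/-- The non-significant transitions of `A_weak`. -/
def weakNonsig : Set (St17 × Sig8 × St17) :=
  {t | (∃ l ∈ [ly, la, lb, lc], t = (.I, l, .I)) ∨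
       (∃ α : ABC, t = (.I, lx, .io α)) ∨
       (∃ α : ABC, t = (.io α, lx, .io α)) ∨
       (∃ α β : ABC, α ≠ β ∧ t = (.io α, β.tolet, .I)) ∨
       (∃ α : ABC, t = (.io α, ly, .I)) ∨
       (∃ α : ABC, ∃ l ∈ [ly, la, lb, lc], t = (.p α, l, .p α)) ∨
       (∃ α : ABC, t = (.p α, lx, .p' α)) ∨
       (∃ α γ : ABC, t = (.p α, lr γ, .p γ)) ∨
       (∃ α : ABC, t = (.p' α, lx, .p' α)) ∨
       (∃ α : ABC, t = (.p' α, α.tolet, .p α)) ∨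
       (∃ α : ABC, t = (.p' α, ly, .p α)) ∨
       (∃ α β : ABC, α ≠ β ∧ t = (.p' α, β.tolet, .q β)) ∨
       (∃ α γ : ABC, t = (.p' α, lr γ, .p γ)) ∨
       (∃ α : ABC, ∃ l ∈ [ly, la, lb, lc], t = (.q α, l, .q α)) ∨
       (∃ α : ABC, t = (.q α, lx, .q' α)) ∨
       (∃ α γ : ABC, t = (.q α, lr γ, .p γ)) ∨
       (∃ α : ABC, t = (.q' α, lx, .q' α)) ∨
       (∃ α : ABC, t = (.q' α, ly, .q α)) ∨
       (∃ α β : ABC, α ≠ β ∧ t = (.q' α, β.tolet, .q β)) ∨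
       (∃ α γ : ABC, t = (.q' α, lr γ, .p γ)) ∨
       (∃ l ∈ [lx, la, lb, lc], t = (.Y, l, .Y)) ∨
       (∃ γ : ABC, t = (.Y, lr γ, .Y))}

/-- The Büchi automaton `A_weak`. -/
def Aweak : BuchiAutomaton Sig8 St17 where
  init := .I
  trans := weakSig ∪ weakNonsig
  sig := weakSig
  sig_sub := Set.subset_union_left

/-- The 13 good states of `A_weak`:
`{p_a, p_b, p_c, p'_a, p'_b, p'_c, q_a, q_b, q_c, q'_a, q'_b, q'_c, Y}`. -/
def weakGood : Set St17 :=
  {s | (∃ α : ABC, s = .p α ∨ s = .p' α ∨ s = .q α ∨ s = .q' α) ∨ s = .Y}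

/-- The word `a · w`. -/
def consW {σ : Type} (a : σ) (w : ℕ → σ) : ℕ → σ
  | 0 => a
  | n + 1 => w n

/-!
A rewiring `B` keeps the non-significant transitions of `A_weak` among the good states and is
deterministic, so from a good state it reads the blocks `r_a x c x c y` and `r_c x a x c x c y`
along forced paths that end in the same state: from `Y` both loop until the final `y`, and from
any other good state both reach `q'_c` and leave it by the same `c`-transition, which must be
significant because `A_weak` has no non-significant one there. Hence a run of `B` on
`(r_a x c x c y)^ω ∈ L_weak` can be copied block by block into a run on `(r_c x a x c x c y)^ω`
that sees a significant transition in every block. But the latter word is not in `L_weak`: after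
its initial reset `r_c` it continues with `x a x c`, not with two words of one `L_β`.
-/

namespace Stream'

variable {α : Type*}

theorem take_length_cycle (u : List α) (hu : u ≠ []) : take u.length (cycle u hu) = u := by
  rw [cycle_eq, take_append_of_le_length _ _ _ le_rfl, List.take_length]

theorem drop_length_mul_cycle (u : List α) (hu : u ≠ []) (k : ℕ) :
    drop (u.length * k) (cycle u hu) = cycle u hu := by
  induction k with
  | zero => rfl
  | succ k ih =>
    rw [Nat.mul_succ, ← drop_drop, ih, cycle_eq, drop_append_stream, ← cycle_eq]

theorem get_cycle (u : List α) (hu : u ≠ []) (k : ℕ) {i : ℕ} (hi : i < u.length) :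
    (cycle u hu).get (u.length * k + i) = u[i] := by
  rw [← get_drop, drop_length_mul_cycle, cycle_eq, get_append_left]

end Stream'

theorem wordSegment_eq_take_drop {σ : Type} (w : Stream' σ) (m n : ℕ) :
    wordSegment w m n = (w.drop m).take (n - m) := by
  apply List.ext_getElem (by simp [wordSegment])
  intro i _ _
  simp only [wordSegment, List.getElem_map, List.getElem_range, Stream'.take_get, Stream'.get_drop]
  rfl

theorem wordSegment_cycle {σ : Type} (u : List σ) (hu : u ≠ []) (k : ℕ) :
    wordSegment (Stream'.cycle u hu) (u.length * k) (u.length * (k + 1)) = u := by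
  rw [wordSegment_eq_take_drop, Stream'.drop_length_mul_cycle, Nat.mul_succ,
    Nat.add_sub_cancel_left, Stream'.take_length_cycle]

namespace BuchiAutomaton

variable {σ Q : Type} (A : BuchiAutomaton σ Q)

inductive Path : Q → List σ → Q → Prop
  | nil (p : Q) : Path p [] p
  | cons {p a q u r} : (p, a, q) ∈ A.trans → Path q u r → Path p (a :: u) r

inductive SigPath : Q → List σ → Q → Prop
  | here {p a q u r} : (p, a, q) ∈ A.sig → A.Path q u r → SigPath p (a :: u) r
  | cons {p a q u r} : (p, a, q) ∈ A.trans → SigPath q u r → SigPath p (a :: u) r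

variable {A}

@[simp] theorem path_nil_iff {p q : Q} : A.Path p [] q ↔ p = q :=
  ⟨fun h => by cases h; rfl, fun h => h ▸ .nil p⟩

@[simp] theorem path_cons_iff {p r : Q} {a : σ} {u : List σ} :
    A.Path p (a :: u) r ↔ ∃ q, (p, a, q) ∈ A.trans ∧ A.Path q u r :=
  ⟨fun h => by cases h with | cons hpq h => exact ⟨_, hpq, h⟩,
    fun ⟨_, hpq, h⟩ => .cons hpq h⟩

theorem Path.mem_of_closed {G : Set Q}
    (hG : ∀ p a q, (p, a, q) ∈ A.trans → p ∈ G → q ∈ G) {p q : Q} {u : List σ}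
    (h : A.Path p u q) (hp : p ∈ G) : q ∈ G := by
  induction h with
  | nil => exact hp
  | cons hpq _ ih => exact ih (hG _ _ _ hpq hp)

theorem Path.exists_states {p q : Q} {u : List σ} (h : A.Path p u q) :
    ∃ π : ℕ → Q, π 0 = p ∧ π u.length = q ∧
      ∀ i (hi : i < u.length), (π i, u[i], π (i + 1)) ∈ A.trans := by
  induction h with
  | nil p => exact ⟨fun _ => p, rfl, rfl, fun i hi => absurd hi (Nat.not_lt_zero i)⟩
  | @cons p a q u r hpq _ ih =>
    obtain ⟨π, h0, hlen, hstep⟩ := ih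
    refine ⟨consW p π, rfl, hlen, fun i hi => ?_⟩
    cases i with
    | zero => rw [← h0] at hpq; exact hpq
    | succ i => exact hstep i (by simpa using hi)

theorem SigPath.exists_states {p q : Q} {u : List σ} (h : A.SigPath p u q) :
    ∃ π : ℕ → Q, π 0 = p ∧ π u.length = q ∧
      (∀ i (hi : i < u.length), (π i, u[i], π (i + 1)) ∈ A.trans) ∧
      ∃ i, ∃ hi : i < u.length, (π i, u[i], π (i + 1)) ∈ A.sig := by
  induction h with
  | @here p a q u r hpq hpath =>
    obtain ⟨π, h0, hlen, hstep⟩ := hpath.exists_states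
    rw [← h0] at hpq
    refine ⟨consW p π, rfl, hlen, fun i hi => ?_, 0, by simp, hpq⟩
    cases i with
    | zero => exact A.sig_sub hpq
    | succ i => exact hstep i (by simpa using hi)
  | @cons p a q u r hpq _ ih =>
    obtain ⟨π, h0, hlen, hstep, i, hi, hsig⟩ := ih
    rw [← h0] at hpq
    refine ⟨consW p π, rfl, hlen, fun i hi => ?_, i + 1, by simpa using hi, hsig⟩
    cases i with
    | zero => exact hpq
    | succ i => exact hstep i (by simpa using hi)

theorem path_take_drop {w : Stream' σ} {ρ : ℕ → Q}
    (hρ : ∀ i, (ρ i, w.get i, ρ (i + 1)) ∈ A.trans) (m n : ℕ) :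
    A.Path (ρ m) ((w.drop m).take n) (ρ (m + n)) := by
  induction n generalizing m with
  | zero => exact .nil _
  | succ n ih =>
    rw [Stream'.take_succ, Stream'.tail_drop', Stream'.head_drop,
      show m + (n + 1) = m + 1 + n by omega]
    exact .cons (hρ m) (ih (m + 1))

theorem path_of_run_cycle {u : List σ} (hu : u ≠ []) {ρ : ℕ → Q}
    (hρ : ∀ i, (ρ i, (Stream'.cycle u hu).get i, ρ (i + 1)) ∈ A.trans) (k : ℕ) :
    A.Path (ρ (u.length * k)) u (ρ (u.length * (k + 1))) := by
  simpa [Stream'.drop_length_mul_cycle, Stream'.take_length_cycle, Nat.mul_succ]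
    using path_take_drop hρ (u.length * k) u.length

theorem cycle_mem_langFrom_of_sigPath {u : List σ} (hu : u ≠ []) {v : ℕ → Q}
    (h : ∀ k, A.SigPath (v k) u (v (k + 1))) : Stream'.cycle u hu ∈ A.LangFrom (v 0) := by
  choose π hπ0 hπlen hstep hsig using fun k => (h k).exists_states
  set L := u.length
  have hL : 0 < L := List.length_pos_iff.mpr hu
  -- The run `n ↦ π (n / L) (n % L)` concatenates the block paths; the case `i = L` glues
  -- consecutive blocks together.
  have hρ : ∀ k i, i ≤ L → π ((L * k + i) / L) ((L * k + i) % L) = π k i := by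
    intro k i hi
    rcases hi.lt_or_eq with hi | rfl
    · rw [Nat.mul_add_div hL, Nat.div_eq_of_lt hi, Nat.mul_add_mod, Nat.mod_eq_of_lt hi, add_zero]
    · rw [← Nat.mul_succ, Nat.mul_div_cancel_left _ hL, Nat.mul_mod_right, hπ0, ← hπlen]
  refine ⟨fun n => π (n / L) (n % L), ⟨by simp [hπ0], fun n => ?_⟩, fun N => ?_⟩
  · obtain ⟨k, i, hi, rfl⟩ : ∃ k i, i < L ∧ n = L * k + i :=
      ⟨n / L, n % L, Nat.mod_lt n hL, (Nat.div_add_mod n L).symm⟩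
    have := hstep k i hi
    rw [← hρ k i hi.le, ← hρ k (i + 1) hi, ← Stream'.get_cycle u hu k hi] at this
    exact this
  · obtain ⟨i, hi, hs⟩ := hsig N
    refine ⟨L * N + i, le_add_right (Nat.le_mul_of_pos_left N hL), ?_⟩
    rw [← hρ N i hi.le, ← hρ N (i + 1) hi, ← Stream'.get_cycle u hu N hi] at hs
    exact hs

end BuchiAutomaton

open Sig8

theorem NoReset.eq_nil_of_append_stream_eq {u : List Sig8} (hu : u ∈ NoReset)
    {s t : Stream' Sig8} {γ : ABC} (h : u ++ₛ s = Stream'.cons (lr γ) t) : u = [] := by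
  cases u with
  | nil => rfl
  | cons e u =>
    rw [Stream'.cons_append_stream] at h
    exact absurd (Stream'.cons_injective2 h).1 (hu e List.mem_cons_self γ)

theorem Lfin.subset_noReset (α : ABC) : Lfin α ⊆ NoReset := by
  rintro _ ⟨u, hu, rfl⟩ l hl γ rfl
  simp only [List.mem_append, List.mem_cons, List.not_mem_nil, or_false] at hl
  rcases hl with hl | hl | hl
  · simpa using hu _ hl
  · exact Sig8.noConfusion hl
  · cases α <;> exact Sig8.noConfusion hl

theorem Lfin.append_stream_ne {α : ABC} {v : List Sig8} (hv : v ∈ Lfin α) (s t : Stream' Sig8)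
    (γ : ABC) : v ++ₛ s ≠ Stream'.cons (lr γ) t := by
  intro h
  have hnil := NoReset.eq_nil_of_append_stream_eq (Lfin.subset_noReset α hv) h
  obtain ⟨u, -, rfl⟩ := hv
  simp at hnil

theorem Lfin.append_stream_eq {β : ABC} {v : List Sig8} (hv : v ∈ Lfin β)
    {s t : Stream' Sig8} {ℓ : Sig8} (hℓx : ℓ ≠ lx) (hℓy : ℓ ≠ ly)
    (h : v ++ₛ s = Stream'.cons lx (Stream'.cons ℓ t)) : β.tolet = ℓ ∧ s = t := by
  obtain ⟨u, hu, rfl⟩ := hv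
  rcases u with _ | ⟨e, _ | ⟨e', u⟩⟩
  · simpa [Stream'.cons_append_stream, Stream'.cons_injective2.eq_iff] using h
  · simp [Stream'.cons_append_stream, Stream'.cons_injective2.eq_iff, hℓx.symm] at h
  · simp only [List.cons_append, Stream'.cons_append_stream,
      Stream'.cons_injective2.eq_iff] at h
    rcases hu e' (by simp) with he | he <;> simp_all

def vBlock : List Sig8 := [lr .a, lx, lc, lx, lc, ly]

def wBlock : List Sig8 := [lr .c, lx, la, lx, lc, lx, lc, ly]

def vWord : Stream' Sig8 := Stream'.cycle vBlock (List.cons_ne_nil _ _)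

def wWord : Stream' Sig8 := Stream'.cycle wBlock (List.cons_ne_nil _ _)

theorem vWord_mem_LWeak : vWord ∈ LWeak := by
  refine ⟨fun k => vBlock.length * k, rfl, strictMono_mul_left_of_pos (by simp [vBlock]),
    fun k => ?_⟩
  rw [show wordSegment vWord (vBlock.length * k) (vBlock.length * (k + 1)) = vBlock from
    wordSegment_cycle vBlock _ k]
  exact ⟨.a, .c, by decide, [], [lr .a], [lx, lc], [lx, lc], [], by simp [NoReset], Or.inr rfl,
    ⟨[], by simp [XYword], rfl⟩, ⟨[], by simp [XYword], rfl⟩, rfl⟩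

theorem wWord_not_mem_LWeak : wWord ∉ LWeak := by
  rintro ⟨φ, hφ0, -, hblock⟩
  obtain ⟨α, β, -, u, v₁, v₂, v₃, z, hu, hv₁, hv₂, hv₃, hw⟩ := hblock 0
  rw [hφ0, wordSegment_eq_take_drop, Stream'.drop_zero, Nat.sub_zero] at hw
  have h := Stream'.append_take_drop (φ 1) wWord
  rw [hw] at h
  simp only [Stream'.append_append_stream] at h
  generalize Stream'.drop (φ 1) wWord = rest at h
  rw [show wWord = wBlock ++ₛ wWord from Stream'.cycle_eq _ _] at h
  simp only [wBlock, Stream'.cons_append_stream] at h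
  obtain rfl := NoReset.eq_nil_of_append_stream_eq hu h
  rcases hv₁ with hv₁ | rfl
  · exact Lfin.append_stream_ne hv₁ _ _ _ h
  simp only [Stream'.nil_append_stream, Stream'.cons_append_stream,
    Stream'.cons_injective2.eq_iff] at h
  obtain ⟨hβa, h⟩ := Lfin.append_stream_eq hv₂ (by decide) (by decide) h.2
  obtain ⟨hβc, -⟩ := Lfin.append_stream_eq hv₃ (by decide) (by decide) h
  cases β <;> simp [ABC.tolet] at hβa hβc

theorem disjoint_weakSig_weakNonsig : Disjoint weakSig weakNonsig := by
  refine Set.disjoint_left.mpr fun ⟨p, l, q⟩ hs hn => ?_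
  aesop (add norm unfold [weakNonsig, weakSig])

theorem mem_weakGood_of_mem_weakNonsig {p q : St17} {l : Sig8} (h : (p, l, q) ∈ weakNonsig)
    (hp : p ∈ weakGood) : q ∈ weakGood := by
  aesop (add norm unfold [weakNonsig, weakGood])

theorem Y_mem_weakNonsig {l : Sig8} (hl : l ≠ ly) : (St17.Y, l, St17.Y) ∈ weakNonsig := by
  cases l <;> simp_all [weakNonsig]

theorem reset_mem_weakNonsig {s : St17} (hs : s ∈ weakGood) (hY : s ≠ .Y) (γ : ABC) :
    (s, lr γ, St17.p γ) ∈ weakNonsig := by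
  rcases hs with ⟨α, rfl | rfl | rfl | rfl⟩ | rfl <;> simp_all [weakNonsig]

theorem Y_ly_not_mem_weakNonsig (s : St17) : (St17.Y, ly, s) ∉ weakNonsig := by
  simp [weakNonsig]

theorem q'_tolet_not_mem_weakNonsig (α : ABC) (s : St17) :
    (St17.q' α, α.tolet, s) ∉ weakNonsig := by
  cases α <;> aesop (add norm unfold [weakNonsig, ABC.tolet])

section Rewiring

variable {B : BuchiAutomaton Sig8 St17}

theorem mem_trans_of_mem_weakNonsig
    (hnonsig : B.trans \ B.sig = {t | t ∈ Aweak.trans ∧ t ∉ Aweak.sig ∧ t.1 ∈ weakGood})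
    {t : St17 × Sig8 × St17} (ht : t ∈ weakNonsig) (hgood : t.1 ∈ weakGood) :
    t ∈ B.trans := by
  have : t ∈ B.trans \ B.sig := by
    rw [hnonsig]
    exact ⟨Or.inr ht, Set.disjoint_right.mp disjoint_weakSig_weakNonsig ht, hgood⟩
  exact this.1

theorem eq_of_mem_weakNonsig
    (hnonsig : B.trans \ B.sig = {t | t ∈ Aweak.trans ∧ t ∉ Aweak.sig ∧ t.1 ∈ weakGood})
    (hdet : B.Deterministic) {p q q' : St17} {l : Sig8} (ht : (p, l, q) ∈ weakNonsig)
    (hp : p ∈ weakGood) (h : (p, l, q') ∈ B.trans) : q' = q :=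
  hdet _ _ _ _ h (mem_trans_of_mem_weakNonsig hnonsig ht hp)

theorem mem_weakNonsig_of_not_mem_sig
    (hnonsig : B.trans \ B.sig = {t | t ∈ Aweak.trans ∧ t ∉ Aweak.sig ∧ t.1 ∈ weakGood})
    {t : St17 × Sig8 × St17} (h : t ∈ B.trans) (hs : t ∉ B.sig) : t ∈ weakNonsig := by
  have : t ∈ B.trans \ B.sig := ⟨h, hs⟩
  rw [hnonsig] at this
  exact this.1.resolve_left this.2.1

theorem mem_sig_of_not_mem_weakNonsig
    (hnonsig : B.trans \ B.sig = {t | t ∈ Aweak.trans ∧ t ∉ Aweak.sig ∧ t.1 ∈ weakGood})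
    {t : St17 × Sig8 × St17} (h : t ∈ B.trans) (ht : t ∉ weakNonsig) : t ∈ B.sig :=
  by_contra fun hs => ht (mem_weakNonsig_of_not_mem_sig hnonsig h hs)

theorem mem_weakGood_of_mem_trans
    (hnonsig : B.trans \ B.sig = {t | t ∈ Aweak.trans ∧ t ∉ Aweak.sig ∧ t.1 ∈ weakGood})
    (hsig : ∀ t ∈ B.sig, t.2.2 ∈ weakGood) {p q : St17} {l : Sig8} (h : (p, l, q) ∈ B.trans)
    (hp : p ∈ weakGood) : q ∈ weakGood := by
  by_cases hs : (p, l, q) ∈ B.sig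
  · exact hsig _ hs
  · exact mem_weakGood_of_mem_weakNonsig (mem_weakNonsig_of_not_mem_sig hnonsig h hs) hp

theorem sigPath_wBlock_of_path_vBlock
    (hnonsig : B.trans \ B.sig = {t | t ∈ Aweak.trans ∧ t ∉ Aweak.sig ∧ t.1 ∈ weakGood})
    (hdet : B.Deterministic) {u v : St17} (hu : u ∈ weakGood) (h : B.Path u vBlock v) :
    B.SigPath u wBlock v := by
  have nonsig {t : St17 × Sig8 × St17} (ht : t ∈ weakNonsig)
      (hgood : t.1 ∈ weakGood := by simp [weakGood]) : t ∈ B.trans :=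
    mem_trans_of_mem_weakNonsig hnonsig ht hgood
  have forced {p q q' : St17} {l : Sig8} (ht : (p, l, q) ∈ weakNonsig)
      (h : (p, l, q') ∈ B.trans) (hp : p ∈ weakGood := by simp [weakGood]) : q' = q :=
    eq_of_mem_weakNonsig hnonsig hdet ht hp h
  simp only [vBlock, BuchiAutomaton.path_cons_iff, BuchiAutomaton.path_nil_iff] at h
  obtain ⟨u₁, h₁, u₂, h₂, u₃, h₃, u₄, h₄, u₅, h₅, _, h₆, rfl⟩ := h
  by_cases hY : u = .Y
  · subst hY
    obtain rfl := forced (Y_mem_weakNonsig (by decide)) h₁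
    obtain rfl := forced (Y_mem_weakNonsig (by decide)) h₂
    obtain rfl := forced (Y_mem_weakNonsig (by decide)) h₃
    obtain rfl := forced (Y_mem_weakNonsig (by decide)) h₄
    obtain rfl := forced (Y_mem_weakNonsig (by decide)) h₅
    have loop {l : Sig8} (hl : l ≠ ly) : (St17.Y, l, St17.Y) ∈ B.trans :=
      nonsig (Y_mem_weakNonsig hl)
    exact .cons (loop (by decide)) <| .cons (loop (by decide)) <| .cons (loop (by decide)) <|
      .cons (loop (by decide)) <| .cons (loop (by decide)) <| .cons (loop (by decide)) <|
      .cons (loop (by decide)) <| .here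
        (mem_sig_of_not_mem_weakNonsig hnonsig h₆ (Y_ly_not_mem_weakNonsig _)) (.nil _)
  · obtain rfl := forced (reset_mem_weakNonsig hu hY .a) h₁ hu
    obtain rfl : u₂ = .p' .a := forced (by simp [weakNonsig]) h₂
    obtain rfl : u₃ = .q .c := forced (by simp [weakNonsig, ABC.tolet]) h₃
    obtain rfl : u₄ = .q' .c := forced (by simp [weakNonsig]) h₄
    have hsig := mem_sig_of_not_mem_weakNonsig hnonsig h₅ (q'_tolet_not_mem_weakNonsig .c _)
    exact .cons (q := .p .c) (nonsig (reset_mem_weakNonsig hu hY .c) hu) <|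
      .cons (q := .p' .c) (nonsig (by simp [weakNonsig])) <|
      .cons (q := .q .a) (nonsig (by simp [weakNonsig, ABC.tolet])) <|
      .cons (q := .q' .a) (nonsig (by simp [weakNonsig])) <|
      .cons (q := .q .c) (nonsig (by simp [weakNonsig, ABC.tolet])) <|
      .cons (q := .q' .c) (nonsig (by simp [weakNonsig])) <| .here hsig <| .cons h₆ (.nil _)

end Rewiring

/-- No rewiring of `A_weak` is language-equivalent to `A_weak`:
for every deterministic Büchi automaton `B` whose states are the 13 good states
of `A_weak` (with any of them as initial state), whose non-significant
transitions are exactly the non-significant transitions of `A_weak` with source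
among these states, and whose significant transitions `(p, a, q)` go between
good states and satisfy `L(A_weak, q) = a⁻¹ L(A_weak, p)`, we have
`L(B) ≠ L_weak`. -/
theorem no_rewiring_of_Aweak (B : BuchiAutomaton Sig8 St17)
    (hinit : B.init ∈ weakGood)
    (hnonsig : B.trans \ B.sig =
      {t | t ∈ Aweak.trans ∧ t ∉ Aweak.sig ∧ t.1 ∈ weakGood})
    (hsig : ∀ t ∈ B.sig, t.1 ∈ weakGood ∧ t.2.2 ∈ weakGood ∧
      Aweak.LangFrom t.2.2 = {w | consW t.2.1 w ∈ Aweak.LangFrom t.1})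
    (hdet : B.Deterministic) :
    B.Lang ≠ LWeak := by
  intro hL
  obtain ⟨ρ, ⟨hρ0, hρ⟩, -⟩ : vWord ∈ B.Lang := hL ▸ vWord_mem_LWeak
  have hpath := BuchiAutomaton.path_of_run_cycle (u := vBlock) (List.cons_ne_nil _ _) hρ
  have hgood : ∀ k, ρ (vBlock.length * k) ∈ weakGood := by
    intro k
    induction k with
    | zero => exact hρ0 ▸ hinit
    | succ k ih =>
      exact (hpath k).mem_of_closed
        (fun _ _ _ h hp => mem_weakGood_of_mem_trans hnonsig (fun t ht => (hsig t ht).2.1) h hp)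
        ih
  have hacc := BuchiAutomaton.cycle_mem_langFrom_of_sigPath (u := wBlock) (List.cons_ne_nil _ _)
    fun k => sigPath_wBlock_of_path_vBlock hnonsig hdet (hgood k) (hpath k)
  rw [Nat.mul_zero, hρ0] at hacc
  exact wWord_not_mem_LWeak (hL ▸ hacc)
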